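/- arXiv:2105.12557 — 4 statements merged into one kernel-verified Lean document; each statement's English description precedes it below -/
import Mathlib

section
/- If G is a connected finite simple graph with minimum degree δ(G) ≥ 3, then ∂_s(G) ≥ n(G)/2, i.e., 2·∂_s(G) ≥ n(G). -/
open Finset

namespace StrongDifferential

variable {V : Type*} [Fintype V] [DecidableEq V] (G : SimpleGraph V) [DecidableRel G.Adj]

/-- The external neighbourhood `N_e(D)` of a set `D`: vertices outside `D`
with a neighbour in `D`. -/
def extNbhd (D : Finset V) : Finset V :=
  univ.filter fun u => u ∉ D ∧ ∃ v ∈ D, G.Adj u v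

/-- The external private neighbourhood `epn(v, D)` of `v` with respect to `D`. -/
def epn (v : V) (D : Finset V) : Finset V :=
  univ.filter fun u => u ∉ D ∧ G.neighborFinset u ∩ D = {v}

/-- `D_w`: the vertices of `D` having a nonempty external private neighbourhood. -/
def weak (D : Finset V) : Finset V :=
  D.filter fun v => (epn G v D).Nonempty

/-- `D_s = D \ D_w`. -/
def strong (D : Finset V) : Finset V :=
  D \ weak G D

/-- The strong differential `∂ₛ(D) = |N_e(D)| - |D_w|` of a set `D`. -/
def sdiffSet (D : Finset V) : ℤ :=
  (extNbhd G D).card - (weak G D).card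

/-- The strong differential `∂ₛ(G) = max {∂ₛ(D) : D ⊆ V(G)}` of the graph `G`. -/
def sdiff : ℤ :=
  (univ : Finset V).powerset.sup' ⟨∅, empty_mem_powerset _⟩ (sdiffSet G)

/-- The differential `∂(D) = |N_e(D)| - |D|` of a set `D`. -/
def diffSet (D : Finset V) : ℤ :=
  (extNbhd G D).card - D.card

/-- The differential `∂(G) = max {∂(D) : D ⊆ V(G)}` of the graph `G`. -/
def gdiff : ℤ :=
  (univ : Finset V).powerset.sup' ⟨∅, empty_mem_powerset _⟩ (diffSet G)

/-- A dominating set: every vertex outside `D` has a neighbour in `D`. -/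
def IsDomSet (D : Finset V) : Prop :=
  ∀ v, v ∉ D → ∃ u ∈ D, G.Adj v u

/-- The domination number `γ(G)`. -/
noncomputable def gamma : ℕ :=
  sInf {k | ∃ D : Finset V, IsDomSet G D ∧ D.card = k}

/-- A 2-dominating set: every vertex outside `D` has at least two neighbours in `D`. -/
def Is2DomSet (D : Finset V) : Prop :=
  ∀ v, v ∉ D → 2 ≤ (G.neighborFinset v ∩ D).card

/-- The 2-domination number `γ₂(G)`. -/
noncomputable def gamma2 : ℕ :=
  sInf {k | ∃ D : Finset V, Is2DomSet G D ∧ D.card = k}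

/-- An Italian dominating function: `f : V → {0,1,2}` such that every
vertex of weight `0` has total weight at least `2` on its neighbourhood. -/
def IsIDF (f : V → ℕ) : Prop :=
  (∀ v, f v ≤ 2) ∧ ∀ v, f v = 0 → 2 ≤ ∑ u ∈ G.neighborFinset v, f u

/-- The Italian domination number `γ_I(G)`. -/
noncomputable def italian : ℕ :=
  sInf {k | ∃ f : V → ℕ, IsIDF G f ∧ ∑ v, f v = k}

/-- `σ(G)`: the number of vertices adjacent to at least two leaves. -/
def sigmaSupp : ℕ :=
  (univ.filter fun v => 2 ≤ ((G.neighborFinset v).filter fun u => G.degree u = 1).card).card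

/-- The independence number `α(G)`. -/
noncomputable def indepNum : ℕ :=
  sSup {k | ∃ S : Finset V, (∀ u ∈ S, ∀ w ∈ S, u ≠ w → ¬ G.Adj u w) ∧ S.card = k}

/-- The vertex cover number `β(G)`. -/
noncomputable def vcNum : ℕ :=
  sInf {k | ∃ S : Finset V, (∀ u v, G.Adj u v → u ∈ S ∨ v ∈ S) ∧ S.card = k}

/-- A semitotal dominating set: a dominating set in which every vertex is
within distance two of another vertex of the set. -/
def IsSemitotalDomSet (D : Finset V) : Prop :=
  IsDomSet G D ∧ ∀ v ∈ D, ∃ u ∈ D, u ≠ v ∧ (G.Adj v u ∨ ∃ w, G.Adj v w ∧ G.Adj w u)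

/-- The semitotal domination number `γ_{t2}(G)`. -/
noncomputable def gammaT2 : ℕ :=
  sInf {k | ∃ D : Finset V, IsSemitotalDomSet G D ∧ D.card = k}

/-- Auxiliary: the (weighted) cut value of a set `D`. -/
def cutVal (D : Finset V) : ℤ :=
  ∑ w, if w ∈ D then ((G.neighborFinset w \ D).card : ℤ) else 0

lemma cut_erase (D : Finset V) {v : V} (hv : v ∈ D) :
    cutVal G (D.erase v) + ((G.neighborFinset v \ D).card : ℤ)
      = cutVal G D + ((G.neighborFinset v ∩ D).card : ℤ) := by
  classical
  unfold cutVal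
  have hpt : ∀ w : V,
      (if w ∈ D.erase v then ((G.neighborFinset w \ D.erase v).card : ℤ) else 0)
      = (if w ∈ D then ((G.neighborFinset w \ D).card : ℤ) else 0)
        + ((if w = v then -((G.neighborFinset v \ D).card : ℤ) else 0)
          + (if w ∈ D ∧ G.Adj w v ∧ w ≠ v then 1 else 0)) := by
    intro w
    by_cases hw : w = v
    · subst hw
      rw [if_neg (Finset.notMem_erase w D), if_pos hv, if_pos rfl, if_neg (by simp)]
      ring
    · by_cases hwD : w ∈ D
      · have hmem : w ∈ D.erase v := Finset.mem_erase.mpr ⟨hw, hwD⟩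
        by_cases hadj : G.Adj w v
        · have hins : G.neighborFinset w \ D.erase v
              = insert v (G.neighborFinset w \ D) := by
            ext x
            simp only [Finset.mem_sdiff, Finset.mem_erase, Finset.mem_insert,
              SimpleGraph.mem_neighborFinset]
            constructor
            · rintro ⟨hx, h2⟩
              by_cases hxv : x = v
              · exact Or.inl hxv
              · exact Or.inr ⟨hx, fun hxD => h2 ⟨hxv, hxD⟩⟩
            · rintro (rfl | ⟨hx, hxD⟩)
              · exact ⟨hadj, fun h => h.1 rfl⟩
              · exact ⟨hx, fun h => hxD h.2⟩
          rw [if_pos hmem, if_pos hwD, if_neg hw, if_pos ⟨hwD, hadj, hw⟩]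
          rw [hins, Finset.card_insert_of_notMem (by simp [hv])]
          push_cast
          ring
        · have heq : G.neighborFinset w \ D.erase v = G.neighborFinset w \ D := by
            ext x
            simp only [Finset.mem_sdiff, Finset.mem_erase,
              SimpleGraph.mem_neighborFinset]
            constructor
            · rintro ⟨hx, h2⟩
              refine ⟨hx, fun hxD => ?_⟩
              have hxv : x ≠ v := fun h => hadj (h ▸ hx)
              exact h2 ⟨hxv, hxD⟩
            · rintro ⟨hx, hxD⟩
              exact ⟨hx, fun h => hxD h.2⟩
          rw [if_pos hmem, if_pos hwD, if_neg hw, if_neg (by tauto), heq]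
          ring
      · have hnm : w ∉ D.erase v := fun h => hwD (Finset.mem_of_mem_erase h)
        rw [if_neg hnm, if_neg hwD, if_neg hw, if_neg (by tauto)]
        ring
  rw [Finset.sum_congr rfl fun w _ => hpt w]
  rw [Finset.sum_add_distrib, Finset.sum_add_distrib]
  have h1 : (∑ w : V, if w = v then -((G.neighborFinset v \ D).card : ℤ) else 0)
      = -((G.neighborFinset v \ D).card : ℤ) := by
    rw [Finset.sum_ite_eq' Finset.univ v fun _ => -((G.neighborFinset v \ D).card : ℤ)]
    simp
  have h2 : (∑ w : V, if w ∈ D ∧ G.Adj w v ∧ w ≠ v then (1 : ℤ) else 0)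
      = ((G.neighborFinset v ∩ D).card : ℤ) := by
    rw [← Finset.sum_filter]
    have hfil : Finset.univ.filter (fun w => w ∈ D ∧ G.Adj w v ∧ w ≠ v)
        = G.neighborFinset v ∩ D := by
      ext w
      simp only [Finset.mem_filter, Finset.mem_univ, true_and, Finset.mem_inter,
        SimpleGraph.mem_neighborFinset]
      constructor
      · rintro ⟨h1, h2, _⟩; exact ⟨h2.symm, h1⟩
      · rintro ⟨h1, h2⟩; exact ⟨h2, h1.symm, h1.ne'⟩
    rw [hfil, Finset.sum_const, nsmul_eq_mul, mul_one]
  rw [h1, h2]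
  ring

lemma exists_good_partition :
    ∃ D : Finset V,
      (∀ v ∈ D, (G.neighborFinset v ∩ D).card ≤ (G.neighborFinset v \ D).card) ∧
      (∀ v ∉ D, (G.neighborFinset v \ D).card ≤ (G.neighborFinset v ∩ D).card) := by
  classical
  obtain ⟨D, -, hmax⟩ := Finset.exists_max_image (univ : Finset V).powerset (cutVal G)
    ⟨∅, empty_mem_powerset _⟩
  refine ⟨D, fun v hv => ?_, fun v hv => ?_⟩
  · have h := hmax (D.erase v) (by simp [Finset.subset_univ])
    have key := cut_erase G D hv
    have : (((G.neighborFinset v ∩ D).card : ℤ)) ≤ ((G.neighborFinset v \ D).card : ℤ) := by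
      omega
    exact_mod_cast this
  · have h := hmax D (by simp)
    have h' := hmax (insert v D) (by simp [Finset.subset_univ])
    have key := cut_erase G (insert v D) (Finset.mem_insert_self v D)
    rw [Finset.erase_insert hv] at key
    have e1 : G.neighborFinset v \ insert v D = G.neighborFinset v \ D := by
      ext x
      simp only [Finset.mem_sdiff, Finset.mem_insert, not_or]
      constructor
      · rintro ⟨hx, _, h2⟩; exact ⟨hx, h2⟩
      · rintro ⟨hx, h2⟩
        exact ⟨hx, fun hxv => by subst hxv; exact G.irrefl ((SimpleGraph.mem_neighborFinset _ _ _).1 hx), h2⟩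
    have e2 : G.neighborFinset v ∩ insert v D = G.neighborFinset v ∩ D := by
      ext x
      simp only [Finset.mem_inter, Finset.mem_insert, SimpleGraph.mem_neighborFinset]
      constructor
      · rintro ⟨hx, (rfl | h2)⟩
        · exact absurd hx (G.irrefl)
        · exact ⟨hx, h2⟩
      · rintro ⟨hx, h2⟩; exact ⟨hx, Or.inr h2⟩
    rw [e1, e2] at key
    have : ((G.neighborFinset v \ D).card : ℤ) ≤ ((G.neighborFinset v ∩ D).card : ℤ) := by
      omega
    exact_mod_cast this

lemma sdiffSet_of_2dom {D : Finset V} (h2 : Is2DomSet G D) :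
    sdiffSet G D = (Fintype.card V : ℤ) - D.card := by
  classical
  have hext : extNbhd G D = Dᶜ := by
    ext u
    simp only [extNbhd, Finset.mem_filter, Finset.mem_univ, true_and, Finset.mem_compl]
    constructor
    · rintro ⟨h, -⟩; exact h
    · intro hu
      refine ⟨hu, ?_⟩
      have := h2 u hu
      have hne : (G.neighborFinset u ∩ D).Nonempty := by
        rw [← Finset.card_pos]; omega
      obtain ⟨w, hw⟩ := hne
      rw [Finset.mem_inter, SimpleGraph.mem_neighborFinset] at hw
      exact ⟨w, hw.2, hw.1⟩
  have hweak : weak G D = ∅ := by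
    rw [Finset.eq_empty_iff_forall_notMem]
    intro v hv
    rw [weak, Finset.mem_filter] at hv
    obtain ⟨hvD, u, hu⟩ := hv
    rw [epn, Finset.mem_filter] at hu
    obtain ⟨-, huD, hcard⟩ := hu
    have := h2 u huD
    rw [hcard] at this
    simp at this
  rw [sdiffSet, hext, hweak, Finset.card_compl]
  have h := Finset.card_le_univ D
  simp only [Finset.card_empty, Nat.cast_zero, sub_zero]
  omega

theorem stmt_4 {V : Type*} [Fintype V] [DecidableEq V] (G : SimpleGraph V)
    [DecidableRel G.Adj] (hconn : G.Connected) (hδ : 3 ≤ G.minDegree) :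
    (Fintype.card V : ℤ) ≤ 2 * sdiff G := by
  classical
  obtain ⟨D, hD1, hD2⟩ := exists_good_partition G
  have hdeg : ∀ v : V, (G.neighborFinset v ∩ D).card + (G.neighborFinset v \ D).card
      = G.degree v := by
    intro v
    rw [add_comm, Finset.card_sdiff_add_card_inter]
    rfl
  have hmindeg : ∀ v : V, 3 ≤ G.degree v := fun v => hδ.trans (G.minDegree_le_degree v)
  -- D is 2-dominating
  have h2D : Is2DomSet G D := by
    intro v hv
    have := hD2 v hv
    have := hdeg v
    have := hmindeg v
    omega
  -- Dᶜ is 2-dominating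
  have h2Dc : Is2DomSet G Dᶜ := by
    intro v hv
    rw [Finset.mem_compl, not_not] at hv
    have h1 := hD1 v hv
    have h2 := hdeg v
    have h3 := hmindeg v
    have he : G.neighborFinset v ∩ Dᶜ = G.neighborFinset v \ D := by
      ext x; simp [Finset.mem_sdiff, Finset.mem_compl]
    rw [he]
    omega
  have hsum : D.card + Dᶜ.card = Fintype.card V := by
    rw [Finset.card_compl]
    have := Finset.card_le_univ D
    omega
  -- Pick the smaller of D, Dᶜ
  obtain ⟨W, hW2, hWcard⟩ : ∃ W : Finset V, Is2DomSet G W ∧ 2 * W.card ≤ Fintype.card V := by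
    rcases le_total D.card Dᶜ.card with h | h
    · exact ⟨D, h2D, by omega⟩
    · exact ⟨Dᶜ, h2Dc, by omega⟩
  have hval := sdiffSet_of_2dom G hW2
  have hle : sdiffSet G W ≤ sdiff G :=
    Finset.le_sup' (sdiffSet G) (Finset.mem_powerset.mpr (Finset.subset_univ W))
  have : (Fintype.card V : ℤ) - W.card ≤ sdiff G := hval ▸ hle
  have hcast : (2 : ℤ) * W.card ≤ (Fintype.card V : ℤ) := by exact_mod_cast hWcard
  omega

end StrongDifferential
end

section
/- For a finite simple graph G, the following are equivalent: (i) ∂_s(G) = n(G) − γ(G); (ii) γ₂(G) = γ(G). -/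
open Finset

namespace StrongDifferential

variable {V : Type*} [Fintype V] [DecidableEq V] (G : SimpleGraph V) [DecidableRel G.Adj]

lemma union_rest (D : Finset V) :
    D ∪ (univ \ (D ∪ extNbhd G D)) = univ \ extNbhd G D := by
  ext v
  by_cases h : v ∈ D <;> simp [extNbhd, h]

lemma card_union_rest (D : Finset V) :
    (D ∪ (univ \ (D ∪ extNbhd G D))).card = Fintype.card V - (extNbhd G D).card := by
  rw [union_rest, card_sdiff_of_subset (subset_univ _), card_univ]

lemma isDom_union_rest (D : Finset V) :
    IsDomSet G (D ∪ (univ \ (D ∪ extNbhd G D))) := by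
  intro v hv
  rw [union_rest] at hv
  have hv' : v ∈ extNbhd G D := by
    by_contra h
    exact hv (mem_sdiff.mpr ⟨mem_univ v, h⟩)
  simp only [extNbhd, mem_filter] at hv'
  obtain ⟨-, -, u, hu, hadj⟩ := hv'
  exact ⟨u, mem_union_left _ hu, hadj⟩

lemma gamma_le_card {D : Finset V} (h : IsDomSet G D) : gamma G ≤ D.card :=
  Nat.sInf_le ⟨D, h, rfl⟩

lemma extNbhd_card_le (D : Finset V) : (extNbhd G D).card ≤ Fintype.card V := by
  simpa using card_le_card (subset_univ (extNbhd G D))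

lemma gamma_add_ext_le (D : Finset V) :
    gamma G + (extNbhd G D).card ≤ Fintype.card V := by
  have h1 := gamma_le_card G (isDom_union_rest G D)
  rw [card_union_rest] at h1
  have h2 := extNbhd_card_le G D
  omega

lemma sdiff_le : sdiff G ≤ (Fintype.card V : ℤ) - gamma G := by
  apply Finset.sup'_le
  intro D _
  have h := gamma_add_ext_le G D
  have : (0 : ℤ) ≤ (weak G D).card := Int.natCast_nonneg _
  unfold sdiffSet
  push_cast
  omega

lemma is2Dom_union_rest {D : Finset V} (hw : weak G D = ∅) :
    Is2DomSet G (D ∪ (univ \ (D ∪ extNbhd G D))) := by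
  intro u hu
  rw [union_rest] at hu
  have hu' : u ∈ extNbhd G D := by
    by_contra h
    exact hu (mem_sdiff.mpr ⟨mem_univ u, h⟩)
  simp only [extNbhd, mem_filter] at hu'
  obtain ⟨-, hud, v, hv, hadj⟩ := hu'
  have hvS : v ∈ G.neighborFinset u ∩ D := by
    rw [mem_inter, SimpleGraph.mem_neighborFinset]
    exact ⟨hadj, hv⟩
  have h2 : 2 ≤ (G.neighborFinset u ∩ D).card := by
    by_contra h
    push_neg at h
    interval_cases hc : (G.neighborFinset u ∩ D).card
    · rw [card_eq_zero] at hc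
      rw [hc] at hvS
      exact absurd hvS (notMem_empty v)
    · have hsingle : G.neighborFinset u ∩ D = {v} := by
        rw [card_eq_one] at hc
        obtain ⟨x, hx⟩ := hc
        rw [hx] at hvS ⊢
        rw [mem_singleton] at hvS
        rw [hvS]
      have : v ∈ weak G D := by
        rw [weak, mem_filter]
        refine ⟨hv, u, ?_⟩
        rw [epn, mem_filter]
        exact ⟨mem_univ u, hud, hsingle⟩
      rw [hw] at this
      exact absurd this (notMem_empty v)
  calc 2 ≤ (G.neighborFinset u ∩ D).card := h2
    _ ≤ (G.neighborFinset u ∩ (D ∪ (univ \ (D ∪ extNbhd G D)))).card :=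
      card_le_card (inter_subset_inter (Finset.Subset.refl _) subset_union_left)

lemma gamma_le_gamma2 : gamma G ≤ gamma2 G := by
  have hne : {k | ∃ D : Finset V, Is2DomSet G D ∧ D.card = k}.Nonempty :=
    ⟨(univ : Finset V).card, univ, fun v hv => absurd (mem_univ v) hv, rfl⟩
  obtain ⟨D, hD, hcard⟩ := Nat.sInf_mem hne
  unfold gamma2
  rw [← hcard]
  apply gamma_le_card
  intro v hv
  have h2 := hD v hv
  have : (G.neighborFinset v ∩ D).Nonempty := by
    rw [← card_pos]; omega
  obtain ⟨u, hu⟩ := this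
  rw [mem_inter, SimpleGraph.mem_neighborFinset] at hu
  exact ⟨u, hu.2, hu.1⟩

theorem stmt_7 {V : Type*} [Fintype V] [DecidableEq V] (G : SimpleGraph V)
    [DecidableRel G.Adj] :
    sdiff G = (Fintype.card V : ℤ) - gamma G ↔ gamma2 G = gamma G := by
  constructor
  · intro h
    refine le_antisymm ?_ (gamma_le_gamma2 G)
    obtain ⟨D, hDmem, hDeq⟩ :=
      Finset.exists_mem_eq_sup' (⟨∅, empty_mem_powerset _⟩ :
        ((univ : Finset V).powerset).Nonempty) (sdiffSet G)
    unfold sdiff at h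
    rw [hDeq] at h
    have hle := gamma_add_ext_le G D
    have hwz : (weak G D).card = 0 ∧
        (extNbhd G D).card = Fintype.card V - gamma G := by
      unfold sdiffSet at h
      have hγn : gamma G ≤ Fintype.card V := by omega
      constructor
      · omega
      · omega
    have hw : weak G D = ∅ := card_eq_zero.mp hwz.1
    have h2dom := is2Dom_union_rest G hw
    have hcard : (D ∪ (univ \ (D ∪ extNbhd G D))).card = gamma G := by
      rw [card_union_rest, hwz.2]
      omega
    exact Nat.sInf_le ⟨_, h2dom, hcard⟩
  · intro h
    refine le_antisymm (sdiff_le G) ?_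
    have hne : {k | ∃ D : Finset V, Is2DomSet G D ∧ D.card = k}.Nonempty :=
      ⟨(univ : Finset V).card, univ, fun v hv => absurd (mem_univ v) hv, rfl⟩
    obtain ⟨D, hD, hcard⟩ := Nat.sInf_mem hne
    have hcard' : D.card = gamma G := by rw [hcard]; exact h
    have hw : weak G D = ∅ := by
      rw [eq_empty_iff_forall_notMem]
      intro v hv
      rw [weak, mem_filter] at hv
      obtain ⟨hvD, u, hu⟩ := hv
      rw [epn, mem_filter] at hu
      obtain ⟨-, huD, hsing⟩ := hu
      have := hD u huD
      rw [hsing, card_singleton] at this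
      omega
    have hext : extNbhd G D = univ \ D := by
      ext u
      simp only [extNbhd, mem_filter, mem_univ, true_and, mem_sdiff]
      constructor
      · exact fun h => h.1
      · intro huD
        refine ⟨huD, ?_⟩
        have h2 := hD u huD
        have : (G.neighborFinset u ∩ D).Nonempty := by
          rw [← card_pos]; omega
        obtain ⟨w, hwm⟩ := this
        rw [mem_inter, SimpleGraph.mem_neighborFinset] at hwm
        exact ⟨w, hwm.2, hwm.1⟩
    have hval : sdiffSet G D = (Fintype.card V : ℤ) - gamma G := by
      unfold sdiffSet
      rw [hw, hext, card_sdiff_of_subset (subset_univ D), card_univ, card_empty, hcard']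
      have : gamma G ≤ Fintype.card V := hcard' ▸ card_le_univ D
      push_cast [Nat.cast_sub this]
      ring
    calc (Fintype.card V : ℤ) - gamma G = sdiffSet G D := hval.symm
      _ ≤ sdiff G := Finset.le_sup' _ (mem_powerset.mpr (subset_univ D))

end StrongDifferential
end

section
/- For a finite simple graph G, the following are equivalent: (i) ∂_s(G) = n(G) − 2γ(G); (ii) every minimum dominating set D of G satisfies ∂_s(D) = ∂_s(G) and D_s = ∅ (every vertex of D has an external private neighbour with respect to D). -/
open Finset

namespace StrongDifferential

variable {V : Type*} [Fintype V] [DecidableEq V] (G : SimpleGraph V) [DecidableRel G.Adj]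

lemma extNbhd_of_dom (D : Finset V) (h : IsDomSet G D) :
    extNbhd G D = univ \ D := by
  ext u
  simp only [extNbhd, mem_filter, mem_univ, true_and, mem_sdiff]
  constructor
  · exact fun h' => h'.1
  · intro hu; exact ⟨hu, h u hu⟩

lemma sdiffSet_dom (D : Finset V) (h : IsDomSet G D) :
    sdiffSet G D = (Fintype.card V : ℤ) - 2 * D.card + (strong G D).card := by
  have hw : weak G D ⊆ D := filter_subset _ _
  have h1 : (extNbhd G D).card = Fintype.card V - D.card := by
    rw [extNbhd_of_dom G D h, card_sdiff_of_subset (subset_univ D), card_univ]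
  have h2 : (strong G D).card = D.card - (weak G D).card := card_sdiff_of_subset hw
  have hle : (weak G D).card ≤ D.card := card_le_card hw
  have hle2 : D.card ≤ Fintype.card V := card_le_univ D
  unfold sdiffSet
  rw [h1]
  omega

lemma sdiffSet_le_sdiff (D : Finset V) : sdiffSet G D ≤ sdiff G :=
  Finset.le_sup' _ (mem_powerset.mpr (subset_univ D))

lemma exists_min_dom : ∃ D : Finset V, IsDomSet G D ∧ D.card = gamma G := by
  have hne : {k | ∃ D : Finset V, IsDomSet G D ∧ D.card = k}.Nonempty :=
    ⟨(univ : Finset V).card, univ, fun v hv => absurd (mem_univ v) hv, rfl⟩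
  exact Nat.sInf_mem hne

theorem stmt_9 {V : Type*} [Fintype V] [DecidableEq V] (G : SimpleGraph V)
    [DecidableRel G.Adj] :
    sdiff G = (Fintype.card V : ℤ) - 2 * gamma G ↔
      ∀ D : Finset V, IsDomSet G D → D.card = gamma G →
        sdiffSet G D = sdiff G ∧ strong G D = ∅ := by
  constructor
  · intro h D hdom hcard
    have hs := sdiffSet_dom G D hdom
    have hle := sdiffSet_le_sdiff G D
    rw [hs, hcard, h] at hle
    have hzero : (strong G D).card = 0 := by omega
    have hstr : strong G D = ∅ := card_eq_zero.mp hzero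
    refine ⟨?_, hstr⟩
    rw [hs, hstr, hcard, h]
    simp
  · intro h
    obtain ⟨D, hdom, hcard⟩ := exists_min_dom G
    obtain ⟨h1, h2⟩ := h D hdom hcard
    rw [← h1, sdiffSet_dom G D hdom, h2, hcard]
    simp

end StrongDifferential
end

section
/- For any finite tree T, ∂_s(T) ≤ ⌊(n(T) + 3·∂(T))/4⌋, i.e., 4·∂_s(T) ≤ n(T) + 3·∂(T). -/
/-!
Write `γ_R` and `γ_I` for the Roman and Italian domination numbers. A set `D` gives the Italian
dominating function that is `2` on `D_w`, `0` on `N_e(D)` and `1` elsewhere, of weight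
`n - ∂_s(D)`; a Roman dominating function that is `2` on `A` and `1` on `B` gives the set `A` with
`∂(A) ≥ n - (2|A| + |B|)`. So it suffices to show `3 γ_R(T) ≤ 4 γ_I(T)` for trees.

Given an Italian dominating function `f` on an induced subforest, we cut off a small set `W`
that can be Roman dominated at cost at most `4/3` of its `f`-weight, such that `f` stays Italian
on the rest, and induct. A vertex of value `2` with its zero neighbours, a nonzero vertex without
zero neighbours, or a zero vertex with two pendant neighbours of nonzero value can be cut off.
If there is none, a deepest vertex of the forest sits on a path `v - z - c` with `f v = f c = 1`,
`f z = 0`, where `c` is a leaf and `z` has degree two, and `W` is built around `v`.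
-/

open Finset

namespace StrongDifferential

variable {V : Type*} {T : SimpleGraph V} {S W A B : Finset V} {f : V → ℕ} {u v w x z c : V}

/-- `(A, B)` stands for the Roman dominating function of `S` that is `2` on `A`, `1` on `B` and
`0` elsewhere; its weight is at most `2 * #A + #B`. -/
def IsRomanPair (T : SimpleGraph V) (S A B : Finset V) : Prop :=
  ∀ v ∈ S, v ∉ A → v ∉ B → ∃ a ∈ A, T.Adj v a

lemma IsRomanPair.union [DecidableEq V] {W' A' B' : Finset V} (h : IsRomanPair T W A B)
    (h' : IsRomanPair T W' A' B') (hS : S ⊆ W ∪ W') : IsRomanPair T S (A ∪ A') (B ∪ B') := by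
  intro v hv hA hB
  simp only [mem_union, not_or] at hA hB
  rcases mem_union.1 (hS hv) with hvW | hvW
  · obtain ⟨a, ha, hadj⟩ := h v hvW hA.1 hB.1
    exact ⟨a, mem_union_left _ ha, hadj⟩
  · obtain ⟨a, ha, hadj⟩ := h' v hvW hA.2 hB.2
    exact ⟨a, mem_union_right _ ha, hadj⟩

lemma isRomanPair_self : IsRomanPair T B ∅ B := fun _ hv _ hvB => absurd hv hvB

lemma isRomanPair_middle [DecidableEq V] (hvz : T.Adj v z) (hcz : T.Adj c z) :
    IsRomanPair T {v, z, c} {z} ∅ := by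
  intro w hw hwz _
  simp only [mem_insert, mem_singleton] at hw hwz
  rcases hw with rfl | rfl | rfl
  exacts [⟨z, mem_singleton_self z, hvz⟩, absurd rfl hwz, ⟨z, mem_singleton_self z, hcz⟩]

variable [DecidableRel T.Adj]

def nbrs (T : SimpleGraph V) [DecidableRel T.Adj] (S : Finset V) (v : V) : Finset V :=
  {u ∈ S | T.Adj v u}

@[simp]
lemma mem_nbrs : u ∈ nbrs T S v ↔ u ∈ S ∧ T.Adj v u := mem_filter

lemma nbrs_subset : nbrs T S v ⊆ S := filter_subset _ _

lemma mem_nbrs_comm (hu : u ∈ S) (hv : v ∈ nbrs T S u) : u ∈ nbrs T S v :=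
  mem_nbrs.2 ⟨hu, (mem_nbrs.1 hv).2.symm⟩

/-- Italian domination of the forest induced on `S`; values above `2` are allowed, they only
increase the weight. -/
def IsItalianOn (T : SimpleGraph V) [DecidableRel T.Adj] (S : Finset V) (f : V → ℕ) : Prop :=
  ∀ v ∈ S, f v = 0 → 2 ≤ ∑ u ∈ nbrs T S v, f u

variable [DecidableEq V]

def pendants (T : SimpleGraph V) [DecidableRel T.Adj] (S : Finset V) (f : V → ℕ) (u : V) :
    Finset V :=
  {c ∈ nbrs T S u | f c ≠ 0 ∧ nbrs T S c = {u}}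

@[simp]
lemma mem_pendants :
    c ∈ pendants T S f u ↔ c ∈ nbrs T S u ∧ f c ≠ 0 ∧ nbrs T S c = {u} := mem_filter

def zeroStar (T : SimpleGraph V) [DecidableRel T.Adj] (S : Finset V) (f : V → ℕ) (v : V) :
    Finset V :=
  insert v {u ∈ nbrs T S v | f u = 0}

lemma mem_zeroStar : u ∈ zeroStar T S f v ↔ u = v ∨ u ∈ nbrs T S v ∧ f u = 0 := by
  simp [zeroStar]

lemma zeroStar_subset (hv : v ∈ S) : zeroStar T S f v ⊆ S :=
  insert_subset hv ((filter_subset _ _).trans nbrs_subset)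

lemma isRomanPair_zeroStar : IsRomanPair T (zeroStar T S f v) {v} ∅ := fun w hw hwv _ => by
  rcases mem_zeroStar.1 hw with rfl | hw
  exacts [absurd (mem_singleton_self w) hwv, ⟨v, mem_singleton_self v, (mem_nbrs.1 hw.1).2.symm⟩]

structure IsRemovable (T : SimpleGraph V) [DecidableRel T.Adj] (S : Finset V) (f : V → ℕ)
    (W : Finset V) : Prop where
  nonempty : W.Nonempty
  subset : W ⊆ S
  isItalianOn_sdiff : IsItalianOn T (S \ W) f
  exists_isRomanPair : ∃ A B, IsRomanPair T W A B ∧ 3 * (2 * #A + #B) ≤ 4 * ∑ w ∈ W, f w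

lemma sum_nbrs_sdiff_add_sum_nbrs (hWS : W ⊆ S) (u : V) :
    ∑ w ∈ nbrs T (S \ W) u, f w + ∑ w ∈ nbrs T W u, f w = ∑ w ∈ nbrs T S u, f w := by
  simp only [nbrs, sum_filter]
  exact sum_sdiff hWS

lemma IsItalianOn.sdiff_of_closed (hf : IsItalianOn T S f) (hWS : W ⊆ S)
    (h : ∀ w ∈ W, f w ≠ 0 → ∀ u ∈ nbrs T S w, f u = 0 → u ∈ W) :
    IsItalianOn T (S \ W) f := by
  intro u hu hu0
  obtain ⟨huS, huW⟩ := mem_sdiff.1 hu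
  have hzero : ∑ w ∈ nbrs T W u, f w = 0 := sum_eq_zero fun w hw => by
    obtain ⟨hwW, hadj⟩ := mem_nbrs.1 hw
    by_contra hw0
    exact huW (h w hwW hw0 u (mem_nbrs.2 ⟨huS, hadj.symm⟩) hu0)
  have := sum_nbrs_sdiff_add_sum_nbrs (f := f) (T := T) hWS u
  have := hf u huS hu0
  omega

theorem exists_isRomanPair_of_forall_exists_isRemovable
    (h : ∀ S : Finset V, S.Nonempty → IsItalianOn T S f → ∃ W, IsRemovable T S f W)
    (S : Finset V) (hf : IsItalianOn T S f) :
    ∃ A B, IsRomanPair T S A B ∧ 3 * (2 * #A + #B) ≤ 4 * ∑ v ∈ S, f v := by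
  induction S using Finset.strongInduction with
  | H S ih =>
  rcases S.eq_empty_or_nonempty with rfl | hS
  · exact ⟨∅, ∅, isRomanPair_self, by simp⟩
  obtain ⟨W, hW⟩ := h S hS hf
  obtain ⟨A, B, hAB, hweight⟩ := hW.exists_isRomanPair
  obtain ⟨A', B', hAB', hweight'⟩ :=
    ih (S \ W) (sdiff_ssubset hW.subset hW.nonempty) hW.isItalianOn_sdiff
  refine ⟨A ∪ A', B ∪ B', hAB.union hAB' (union_sdiff_of_subset hW.subset).ge, ?_⟩
  have := card_union_le A A'
  have := card_union_le B B'
  rw [← sum_sdiff hW.subset]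
  omega

lemma isRemovable_zeroStar (hf : IsItalianOn T S f) (hv : v ∈ S) (hfv : 2 ≤ f v) :
    IsRemovable T S f (zeroStar T S f v) where
  nonempty := insert_nonempty _ _
  subset := zeroStar_subset hv
  isItalianOn_sdiff := hf.sdiff_of_closed (zeroStar_subset hv) fun w hw hw0 u hu hu0 => by
    rcases mem_zeroStar.1 hw with rfl | hw
    · exact mem_zeroStar.2 (Or.inr ⟨hu, hu0⟩)
    · exact absurd hw.2 hw0
  exists_isRomanPair := by
    refine ⟨{v}, ∅, isRomanPair_zeroStar, ?_⟩
    have := single_le_sum (fun _ _ => Nat.zero_le _) (mem_zeroStar.2 (Or.inl rfl)) (f := f)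
      (s := zeroStar T S f v)
    simp only [card_singleton, card_empty]
    omega

lemma isRemovable_singleton (hf : IsItalianOn T S f) (hv : v ∈ S) (hfv : f v ≠ 0)
    (hnz : ∀ u ∈ nbrs T S v, f u ≠ 0) : IsRemovable T S f {v} where
  nonempty := singleton_nonempty v
  subset := singleton_subset_iff.2 hv
  isItalianOn_sdiff := hf.sdiff_of_closed (singleton_subset_iff.2 hv) fun w hw _ u hu hu0 => by
    rw [mem_singleton.1 hw] at hu
    exact absurd hu0 (hnz u hu)
  exists_isRomanPair := by
    refine ⟨∅, {v}, isRomanPair_self, ?_⟩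
    simp only [card_empty, card_singleton, sum_singleton]
    omega

lemma isRemovable_pendants (hf : IsItalianOn T S f) (hu : u ∈ S) (hfu : f u = 0) {c₁ c₂ : V}
    (hc₁ : c₁ ∈ pendants T S f u) (hc₂ : c₂ ∈ pendants T S f u) (hc : c₁ ≠ c₂) :
    IsRemovable T S f {c₁, u, c₂} := by
  obtain ⟨hc₁u, hfc₁, hnc₁⟩ := mem_pendants.1 hc₁
  obtain ⟨hc₂u, hfc₂, hnc₂⟩ := mem_pendants.1 hc₂
  have hsub : ({c₁, u, c₂} : Finset V) ⊆ S := by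
    simp only [insert_subset_iff, singleton_subset_iff]
    exact ⟨nbrs_subset hc₁u, hu, nbrs_subset hc₂u⟩
  refine ⟨insert_nonempty _ _, hsub, hf.sdiff_of_closed hsub fun w hw hw0 y hy _ => ?_, ?_⟩
  · simp only [mem_insert, mem_singleton] at hw ⊢
    rcases hw with rfl | rfl | rfl
    · rw [hnc₁, mem_singleton] at hy
      exact Or.inr (Or.inl hy)
    · exact absurd hfu hw0
    · rw [hnc₂, mem_singleton] at hy
      exact Or.inr (Or.inl hy)
  · refine ⟨{u}, ∅, isRomanPair_middle (mem_nbrs.1 hc₁u).2.symm (mem_nbrs.1 hc₂u).2.symm, ?_⟩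
    have hle : ∑ w ∈ {c₁, c₂}, f w ≤ ∑ w ∈ {c₁, u, c₂}, f w :=
      sum_le_sum_of_subset (by simp [insert_subset_iff])
    rw [sum_pair hc] at hle
    simp only [card_singleton, card_empty]
    omega

def IsLeg (T : SimpleGraph V) [DecidableRel T.Adj] (S : Finset V) (f : V → ℕ) (v z : V) :
    Prop :=
  f z = 0 ∧ ∃ c ∈ pendants T S f z, nbrs T S z = {v, c}

lemma isRemovable_of_two_legs (hf : IsItalianOn T S f) (hv : v ∈ S) (hfv : f v ≠ 0)
    {z₁ z₂ c₁ c₂ : V} (hz₁ : z₁ ∈ nbrs T S v) (hz₂ : z₂ ∈ nbrs T S v) (hz : z₁ ≠ z₂)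
    (hfz₁ : f z₁ = 0) (hfz₂ : f z₂ = 0) (hc₁ : c₁ ∈ pendants T S f z₁)
    (hc₂ : c₂ ∈ pendants T S f z₂) :
    IsRemovable T S f ({c₁, c₂} ∪ zeroStar T S f v) := by
  obtain ⟨hc₁S, hfc₁, hnc₁⟩ := mem_pendants.1 hc₁
  obtain ⟨hc₂S, hfc₂, hnc₂⟩ := mem_pendants.1 hc₂
  have hc : c₁ ≠ c₂ := fun h => hz (singleton_injective (hnc₁.symm.trans (h ▸ hnc₂)))
  have hvc₁ : v ≠ c₁ := by
    rintro rfl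
    rw [hnc₁, mem_singleton] at hz₂
    exact hz hz₂.symm
  have hvc₂ : v ≠ c₂ := by
    rintro rfl
    rw [hnc₂, mem_singleton] at hz₁
    exact hz hz₁
  have hsub : {c₁, c₂} ∪ zeroStar T S f v ⊆ S := union_subset
    (insert_subset (nbrs_subset hc₁S) (singleton_subset_iff.2 (nbrs_subset hc₂S)))
    (zeroStar_subset hv)
  refine ⟨by simp, hsub, hf.sdiff_of_closed hsub fun w hw hw0 y hy hy0 => ?_, ?_⟩
  · simp only [mem_union, mem_insert, mem_singleton, mem_zeroStar] at hw ⊢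
    rcases hw with (rfl | rfl) | rfl | hw
    · rw [hnc₁, mem_singleton] at hy
      exact Or.inr (Or.inr ⟨hy ▸ hz₁, hy ▸ hfz₁⟩)
    · rw [hnc₂, mem_singleton] at hy
      exact Or.inr (Or.inr ⟨hy ▸ hz₂, hy ▸ hfz₂⟩)
    · exact Or.inr (Or.inr ⟨hy, hy0⟩)
    · exact absurd hw.2 hw0
  · refine ⟨∅ ∪ {v}, {c₁, c₂} ∪ ∅, isRomanPair_self.union isRomanPair_zeroStar le_rfl, ?_⟩
    have hle : ∑ w ∈ {v, c₁, c₂}, f w ≤ ∑ w ∈ {c₁, c₂} ∪ zeroStar T S f v, f w :=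
      sum_le_sum_of_subset (by
        simp only [insert_subset_iff, singleton_subset_iff, mem_union, mem_insert,
          mem_singleton, mem_zeroStar]
        tauto)
    rw [sum_insert (by simpa [not_or] using ⟨hvc₁, hvc₂⟩), sum_pair hc] at hle
    have := card_le_two (a := c₁) (b := c₂)
    simp only [empty_union, union_empty, card_singleton]
    omega

lemma isRemovable_leg (hf : IsItalianOn T S f) (hv : v ∈ S)
    (hZ : (nbrs T S v).erase x = {z}) (hfz : f z = 0) (hc : c ∈ pendants T S f z)
    (hnz : nbrs T S z = {v, c}) (hx : x ∈ nbrs T S v → f x ≠ 0) :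
    IsRemovable T S f {v, z, c} := by
  obtain ⟨hcz, -, hnc⟩ := mem_pendants.1 hc
  have hzv : z ∈ nbrs T S v := (mem_erase.1 (hZ ▸ mem_singleton_self z)).2
  have hsub : ({v, z, c} : Finset V) ⊆ S := by
    simp only [insert_subset_iff, singleton_subset_iff]
    exact ⟨hv, nbrs_subset hzv, nbrs_subset hcz⟩
  refine ⟨insert_nonempty _ _, hsub, hf.sdiff_of_closed hsub fun w hw hw0 y hy hy0 => ?_, ?_⟩
  · simp only [mem_insert, mem_singleton] at hw ⊢
    rcases hw with rfl | rfl | rfl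
    · by_cases hyx : y = x
      · subst hyx
        exact absurd hy0 (hx hy)
      · exact Or.inr (Or.inl (mem_singleton.1 (hZ ▸ mem_erase.2 ⟨hyx, hy⟩)))
    · exact absurd hfz hw0
    · rw [hnc, mem_singleton] at hy
      exact Or.inr (Or.inl hy)
  · refine ⟨{z}, ∅, isRomanPair_middle (mem_nbrs.1 hzv).2 (mem_nbrs.1 hcz).2.symm, ?_⟩
    have := hf z (nbrs_subset hzv) hfz
    have := sum_le_sum_of_subset (f := f) (hnz ▸ (by simp [insert_subset_iff]) :
      nbrs T S z ⊆ {v, z, c})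
    simp only [card_singleton, card_empty]
    omega

/-- The zero vertex `x` loses its neighbour `v`; it is dominated instead by its other nonzero
neighbour `t`, which pays for itself since `f` is at least `3` on `{v, c, t}`. -/
lemma isRemovable_leg_union_zeroStar (hf : IsItalianOn T S f) (hv : v ∈ S)
    (hZ : (nbrs T S v).erase x = {z}) (hfz : f z = 0) (hc : c ∈ pendants T S f z)
    (hnz : nbrs T S z = {v, c}) (hx : x ∈ nbrs T S v) (hfx : f x = 0) {t : V}
    (ht : t ∈ nbrs T S x) (htv : t ≠ v) (hft : f t ≠ 0) :
    IsRemovable T S f ({v, z, c} ∪ zeroStar T S f t) := by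
  obtain ⟨hcz, -, hnc⟩ := mem_pendants.1 hc
  obtain ⟨hzx, hzv⟩ := mem_erase.1 (hZ ▸ mem_singleton_self z)
  have hzS := nbrs_subset hzv
  have hxt : x ∈ zeroStar T S f t :=
    mem_zeroStar.2 (Or.inr ⟨mem_nbrs_comm (nbrs_subset hx) ht, hfx⟩)
  have hsub : {v, z, c} ∪ zeroStar T S f t ⊆ S := by
    simp only [union_subset_iff, insert_subset_iff, singleton_subset_iff]
    exact ⟨⟨hv, hzS, nbrs_subset hcz⟩, zeroStar_subset (nbrs_subset ht)⟩
  refine ⟨by simp, hsub, hf.sdiff_of_closed hsub fun w hw hw0 y hy hy0 => ?_, ?_⟩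
  · simp only [mem_union, mem_insert, mem_singleton] at hw ⊢
    rcases hw with (rfl | rfl | rfl) | hw
    · by_cases hyx : y = x
      · exact Or.inr (hyx ▸ hxt)
      · exact Or.inl (Or.inr (Or.inl (mem_singleton.1 (hZ ▸ mem_erase.2 ⟨hyx, hy⟩))))
    · exact absurd hfz hw0
    · rw [hnc, mem_singleton] at hy
      exact Or.inl (Or.inr (Or.inl hy))
    · rcases mem_zeroStar.1 hw with rfl | hw
      · exact Or.inr (mem_zeroStar.2 (Or.inr ⟨hy, hy0⟩))
      · exact absurd hw.2 hw0
  · refine ⟨{z} ∪ {t}, ∅ ∪ ∅, (isRomanPair_middle (mem_nbrs.1 hzv).2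
      (mem_nbrs.1 hcz).2.symm).union isRomanPair_zeroStar le_rfl, ?_⟩
    have htz : t ∉ nbrs T S z := by
      rw [hnz, mem_insert, mem_singleton, not_or]
      refine ⟨htv, fun htc => hzx ?_⟩
      have := mem_nbrs_comm (nbrs_subset hx) ht
      rw [htc, hnc, mem_singleton] at this
      exact this.symm
    have hle : ∑ w ∈ insert t (nbrs T S z), f w ≤ ∑ w ∈ {v, z, c} ∪ zeroStar T S f t, f w :=
      sum_le_sum_of_subset (by
        rw [hnz]
        simp only [insert_subset_iff, singleton_subset_iff, mem_union, mem_insert,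
          mem_singleton, mem_zeroStar]
        tauto)
    rw [sum_insert htz] at hle
    have := hf z hzS hfz
    have := card_union_le {z} {t}
    simp only [card_singleton, union_empty, card_empty] at *
    omega

lemma _root_.SimpleGraph.IsTree.eq_of_adj_of_dist_eq_add_one {G : SimpleGraph V} (hG : G.IsTree)
    {ρ x y y' : V} (hy : G.Adj x y) (hy' : G.Adj x y') (h : G.dist ρ x = G.dist ρ y + 1)
    (h' : G.dist ρ x = G.dist ρ y' + 1) : y = y' := by
  obtain ⟨q, hq, -⟩ := hG.connected.exists_path_of_dist ρ x
  suffices hpen : ∀ y, G.Adj x y → G.dist ρ x = G.dist ρ y + 1 → y = q.penultimate from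
    (hpen y hy h).trans (hpen y' hy' h').symm
  intro y hy h
  refine hG.isAcyclic.eq_penultimate_of_adj_end hq hy (by_contra fun hyq => ?_)
  obtain ⟨p, hp, hpl⟩ := hG.connected.exists_path_of_dist ρ y
  have hx := hG.isAcyclic.mem_support_of_ne_mem_support_of_adj_of_isPath hp hq hy.symm hyq
  have := SimpleGraph.dist_le (p.takeUntil x hx)
  have := p.length_takeUntil_le_length hx
  omega

lemma mem_pendants_of_forall_dist_le (hT : T.IsTree) (hf : IsItalianOn T S f)
    (hf1 : ∀ v ∈ S, f v ≤ 1) {ρ : V} (hu : u ∈ S) (hmax : ∀ y ∈ S, T.dist ρ y ≤ T.dist ρ u)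
    (hw : w ∈ nbrs T S u) : u ∈ pendants T S f w ∧ T.dist ρ u = T.dist ρ w + 1 := by
  have hlow : ∀ y ∈ nbrs T S u, T.dist ρ u = T.dist ρ y + 1 := fun y hy =>
    (hT.dist_eq_dist_add_one_of_adj ρ (mem_nbrs.1 hy).2).resolve_right fun h => by
      have := hmax y (nbrs_subset hy)
      omega
  have hnu : nbrs T S u = {w} := eq_singleton_iff_unique_mem.2 ⟨hw, fun y hy =>
    hT.eq_of_adj_of_dist_eq_add_one (mem_nbrs.1 hy).2 (mem_nbrs.1 hw).2 (hlow y hy) (hlow w hw)⟩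
  have hfu : f u ≠ 0 := fun hu0 => by
    have := hf u hu hu0
    have := hf1 w (nbrs_subset hw)
    rw [hnu, sum_singleton] at *
    omega
  exact ⟨mem_pendants.2 ⟨mem_nbrs_comm hu hw, hfu, hnu⟩, hlow w hw⟩

lemma nbrs_subset_insert_pendants (hT : T.IsTree) (hf : IsItalianOn T S f)
    (hf1 : ∀ v ∈ S, f v ≤ 1) {ρ : V} (hz : z ∈ S)
    (hmax : ∀ y ∈ S, T.dist ρ y ≤ T.dist ρ z + 1) (hv : v ∈ nbrs T S z)
    (hvz : T.dist ρ z = T.dist ρ v + 1) : nbrs T S z ⊆ insert v (pendants T S f z) := by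
  intro y hy
  rcases hT.dist_eq_dist_add_one_of_adj ρ (mem_nbrs.1 hy).2 with h | h
  · exact mem_insert.2 (Or.inl (hT.eq_of_adj_of_dist_eq_add_one (mem_nbrs.1 hy).2
      (mem_nbrs.1 hv).2 h hvz))
  · exact mem_insert_of_mem (mem_pendants_of_forall_dist_le hT hf hf1 (nbrs_subset hy)
      (fun y' hy' => h ▸ hmax y' hy') (mem_nbrs_comm hz hy)).1

lemma isLeg_of_nbrs_subset (hf : IsItalianOn T S f) (hf1 : ∀ v ∈ S, f v ≤ 1)
    (hzeroNbr : ∀ ℓ ∈ S, f ℓ ≠ 0 → ∃ u ∈ nbrs T S ℓ, f u = 0)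
    (hpend : ∀ u ∈ S, f u = 0 → #(pendants T S f u) ≤ 1) (hz : z ∈ S) (hv : v ∈ nbrs T S z)
    (hfv : f v ≠ 0) (hsub : nbrs T S z ⊆ insert v (pendants T S f z)) : IsLeg T S f v z := by
  have hfz : f z = 0 := by
    by_contra hfz
    obtain ⟨u, hu, hu0⟩ := hzeroNbr z hz hfz
    rcases mem_insert.1 (hsub hu) with rfl | hu
    exacts [hfv hu0, (mem_pendants.1 hu).2.1 hu0]
  have hsum : 2 ≤ #(pendants T S f z) + 1 :=
    calc 2 ≤ ∑ y ∈ nbrs T S z, f y := hf z hz hfz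
      _ ≤ ∑ y ∈ insert v (pendants T S f z), f y := sum_le_sum_of_subset hsub
      _ ≤ #(insert v (pendants T S f z)) • 1 := sum_le_card_nsmul _ _ _ fun y hy =>
        hf1 y (by rcases mem_insert.1 hy with rfl | hy; exacts [nbrs_subset hv,
          nbrs_subset (mem_pendants.1 hy).1])
      _ ≤ #(pendants T S f z) + 1 := by rw [smul_eq_mul, mul_one]; exact card_insert_le _ _
  obtain ⟨c, hpc⟩ := card_eq_one.1 (le_antisymm (hpend z hz hfz) (by omega))
  have hc : c ∈ pendants T S f z := hpc ▸ mem_singleton_self c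
  exact ⟨hfz, c, hc, Subset.antisymm (hpc ▸ hsub)
    (insert_subset hv (singleton_subset_iff.2 (mem_pendants.1 hc).1))⟩

/-- Here `p` is a child of `v` one level above the deepest vertices; `x` is the parent of `v`,
or `v` itself at the root. -/
lemma exists_erase_isLeg (hT : T.IsTree) (hf : IsItalianOn T S f) (hf1 : ∀ v ∈ S, f v ≤ 1)
    (hzeroNbr : ∀ ℓ ∈ S, f ℓ ≠ 0 → ∃ u ∈ nbrs T S ℓ, f u = 0)
    (hpend : ∀ u ∈ S, f u = 0 → #(pendants T S f u) ≤ 1) {ρ p : V} (hv : v ∈ S) (hfv : f v ≠ 0)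
    (hp : p ∈ nbrs T S v) (hdp : T.dist ρ p = T.dist ρ v + 1)
    (hmax : ∀ y ∈ S, T.dist ρ y ≤ T.dist ρ p + 1) :
    ∃ x, ((nbrs T S v).erase x).Nonempty ∧ ∀ z ∈ (nbrs T S v).erase x, IsLeg T S f v z := by
  obtain ⟨x, hpx, hx⟩ : ∃ x, p ≠ x ∧ ∀ z ∈ nbrs T S v, z ≠ x → T.dist ρ z = T.dist ρ v + 1 := by
    by_cases h : ∃ x ∈ nbrs T S v, T.dist ρ v = T.dist ρ x + 1
    · obtain ⟨x, hx, hdx⟩ := h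
      refine ⟨x, by rintro rfl; omega, fun z hz hzx => ?_⟩
      exact (hT.dist_eq_dist_add_one_of_adj ρ (mem_nbrs.1 hz).2).resolve_left fun hdz =>
        hzx (hT.eq_of_adj_of_dist_eq_add_one (mem_nbrs.1 hz).2 (mem_nbrs.1 hx).2 hdz hdx)
    · exact ⟨v, (mem_nbrs.1 hp).2.ne', fun z hz _ =>
        (hT.dist_eq_dist_add_one_of_adj ρ (mem_nbrs.1 hz).2).resolve_left fun hdz =>
          h ⟨z, hz, hdz⟩⟩
  refine ⟨x, ⟨p, mem_erase.2 ⟨hpx, hp⟩⟩, fun z hz => ?_⟩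
  obtain ⟨hzx, hz⟩ := mem_erase.1 hz
  have hzS := nbrs_subset hz
  have hdz := hx z hz hzx
  refine isLeg_of_nbrs_subset hf hf1 hzeroNbr hpend hzS (mem_nbrs_comm hv hz) hfv ?_
  refine nbrs_subset_insert_pendants hT hf hf1 hzS (fun y hy => ?_) (mem_nbrs_comm hv hz) hdz
  have := hmax y hy
  omega

/-- Root the tree anywhere and take a deepest vertex `ℓ` of `S`: its parent `p` has value `0`,
and the parent `v` of `p` is the vertex sought. -/
theorem exists_isLeg (hT : T.IsTree) (hf : IsItalianOn T S f) (hf1 : ∀ v ∈ S, f v ≤ 1)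
    (hzeroNbr : ∀ ℓ ∈ S, f ℓ ≠ 0 → ∃ u ∈ nbrs T S ℓ, f u = 0)
    (hpend : ∀ u ∈ S, f u = 0 → #(pendants T S f u) ≤ 1) (hS : S.Nonempty) :
    ∃ v ∈ S, f v ≠ 0 ∧ ∃ x, ((nbrs T S v).erase x).Nonempty ∧
      ∀ z ∈ (nbrs T S v).erase x, IsLeg T S f v z := by
  obtain ⟨ρ, hρ⟩ := hS
  obtain ⟨ℓ, hℓ, hmax⟩ := exists_max_image S (T.dist ρ) ⟨ρ, hρ⟩
  obtain ⟨p, hp⟩ : (nbrs T S ℓ).Nonempty := by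
    rw [nonempty_iff_ne_empty]
    intro h
    by_cases hfℓ : f ℓ = 0
    · have := hf ℓ hℓ hfℓ
      rw [h, sum_empty] at this
      omega
    · obtain ⟨u, hu, -⟩ := hzeroNbr ℓ hℓ hfℓ
      exact notMem_empty u (h ▸ hu)
  obtain ⟨hℓp, hdℓ⟩ := mem_pendants_of_forall_dist_le hT hf hf1 hℓ hmax hp
  obtain ⟨-, hfℓ, hnℓ⟩ := mem_pendants.1 hℓp
  have hpS := nbrs_subset hp
  have hmaxp : ∀ y ∈ S, T.dist ρ y ≤ T.dist ρ p + 1 := fun y hy => hdℓ ▸ hmax y hy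
  have hfp : f p = 0 := by
    obtain ⟨u, hu, hu0⟩ := hzeroNbr ℓ hℓ hfℓ
    rw [hnℓ, mem_singleton] at hu
    exact hu ▸ hu0
  obtain ⟨v, hv, hvp, hfv⟩ : ∃ v ∈ nbrs T S p, v ∉ pendants T S f p ∧ f v ≠ 0 := by
    by_contra! h
    have h1 : ∑ y ∈ nbrs T S p, f y ≤ ∑ y ∈ pendants T S f p, f y :=
      sum_le_sum_of_ne_zero fun y hy hy0 => by_contra fun hyp => hy0 (h y hy hyp)
    have h2 : ∑ y ∈ pendants T S f p, f y ≤ #(pendants T S f p) • 1 :=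
      sum_le_card_nsmul _ _ _ fun y hy => hf1 y (nbrs_subset (mem_pendants.1 hy).1)
    have := hf p hpS hfp
    have := hpend p hpS hfp
    rw [smul_eq_mul, mul_one] at h2
    omega
  have hvS := nbrs_subset hv
  have hdp : T.dist ρ p = T.dist ρ v + 1 :=
    (hT.dist_eq_dist_add_one_of_adj ρ (mem_nbrs.1 hv).2).resolve_right fun h => hvp
      (mem_pendants_of_forall_dist_le hT hf hf1 hvS (fun y hy => h ▸ hmaxp y hy)
        (mem_nbrs_comm hpS hv)).1
  exact ⟨v, hvS, hfv,
    exists_erase_isLeg hT hf hf1 hzeroNbr hpend hvS hfv (mem_nbrs_comm hpS hv) hdp hmaxp⟩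

lemma exists_isRemovable_of_erase_isLeg (hf : IsItalianOn T S f) (hf1 : ∀ v ∈ S, f v ≤ 1)
    (hv : v ∈ S) (hfv : f v ≠ 0) (hZ : ((nbrs T S v).erase x).Nonempty)
    (hlegs : ∀ z ∈ (nbrs T S v).erase x, IsLeg T S f v z) : ∃ W, IsRemovable T S f W := by
  by_cases hm : 1 < #((nbrs T S v).erase x)
  · obtain ⟨z₁, hz₁, z₂, hz₂, hz⟩ := one_lt_card.1 hm
    obtain ⟨hfz₁, c₁, hc₁, -⟩ := hlegs z₁ hz₁
    obtain ⟨hfz₂, c₂, hc₂, -⟩ := hlegs z₂ hz₂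
    exact ⟨_, isRemovable_of_two_legs hf hv hfv (mem_of_mem_erase hz₁) (mem_of_mem_erase hz₂)
      hz hfz₁ hfz₂ hc₁ hc₂⟩
  obtain ⟨z, hZz⟩ := card_eq_one.1 (le_antisymm (not_lt.1 hm) hZ.card_pos)
  obtain ⟨hfz, c, hc, hnz⟩ := hlegs z (hZz ▸ mem_singleton_self z)
  by_cases hx : x ∈ nbrs T S v ∧ f x = 0
  · obtain ⟨t, ht, htv, hft⟩ : ∃ t ∈ nbrs T S x, t ≠ v ∧ f t ≠ 0 := by
      by_contra! h
      have := hf x (nbrs_subset hx.1) hx.2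
      have := sum_le_sum_of_ne_zero (s := nbrs T S x) (t := {v}) (f := f) fun y hy hy0 =>
        mem_singleton.2 (by_contra fun hyv => hy0 (h y hy hyv))
      have := hf1 v hv
      rw [sum_singleton] at *
      omega
    exact ⟨_, isRemovable_leg_union_zeroStar hf hv hZz hfz hc hnz hx.1 hx.2 ht htv hft⟩
  · exact ⟨_, isRemovable_leg hf hv hZz hfz hc hnz fun hxv hfx => hx ⟨hxv, hfx⟩⟩

theorem exists_isRemovable_of_isTree (hT : T.IsTree) (hS : S.Nonempty)
    (hf : IsItalianOn T S f) : ∃ W, IsRemovable T S f W := by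
  by_cases h2 : ∃ v ∈ S, 2 ≤ f v
  · obtain ⟨v, hv, hfv⟩ := h2
    exact ⟨_, isRemovable_zeroStar hf hv hfv⟩
  have hf1 : ∀ v ∈ S, f v ≤ 1 := fun v hv => by
    by_contra h
    exact h2 ⟨v, hv, by omega⟩
  by_cases hzeroNbr : ∃ ℓ ∈ S, f ℓ ≠ 0 ∧ ∀ u ∈ nbrs T S ℓ, f u ≠ 0
  · obtain ⟨ℓ, hℓ, hfℓ, hnz⟩ := hzeroNbr
    exact ⟨_, isRemovable_singleton hf hℓ hfℓ hnz⟩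
  by_cases hpend : ∃ u ∈ S, f u = 0 ∧ 1 < #(pendants T S f u)
  · obtain ⟨u, hu, hfu, hcard⟩ := hpend
    obtain ⟨c₁, hc₁, c₂, hc₂, hc⟩ := one_lt_card.1 hcard
    exact ⟨_, isRemovable_pendants hf hu hfu hc₁ hc₂ hc⟩
  obtain ⟨v, hv, hfv, x, hZ, hlegs⟩ := exists_isLeg hT hf hf1
    (fun ℓ hℓ hfℓ => by
      by_contra! h
      exact hzeroNbr ⟨ℓ, hℓ, hfℓ, h⟩)
    (fun u hu hfu => not_lt.1 fun h => hpend ⟨u, hu, hfu, h⟩) hS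
  exact exists_isRemovable_of_erase_isLeg hf hf1 hv hfv hZ hlegs

variable [Fintype V]

def italianOfSet (T : SimpleGraph V) [DecidableRel T.Adj] (D : Finset V) (v : V) : ℕ :=
  if v ∈ weak T D then 2 else if v ∈ extNbhd T D then 0 else 1

lemma isItalianOn_italianOfSet (D : Finset V) : IsItalianOn T univ (italianOfSet T D) := by
  intro v _ hv0
  have hvw : v ∉ weak T D := fun h => by simp [italianOfSet, h] at hv0
  have hvE : v ∈ extNbhd T D := by
    by_contra h
    simp [italianOfSet, hvw, h] at hv0
  obtain ⟨-, hvD, u, huD, hvu⟩ := mem_filter.1 hvE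
  by_cases hw : ∃ y ∈ nbrs T univ v, y ∈ weak T D
  · obtain ⟨y, hy, hyw⟩ := hw
    refine le_trans ?_ (single_le_sum (fun _ _ => Nat.zero_le _) hy)
    simp [italianOfSet, hyw]
  -- a single neighbour in `D` would have `v` as external private neighbour
  have hD2 : 1 < #(nbrs T D v) := by
    by_contra h
    have hnu : nbrs T D v = {u} := eq_singleton_iff_unique_mem.2
      ⟨mem_nbrs.2 ⟨huD, hvu⟩, fun y hy => card_le_one.1 (not_lt.1 h) y hy u
        (mem_nbrs.2 ⟨huD, hvu⟩)⟩
    refine hw ⟨u, mem_nbrs.2 ⟨mem_univ u, hvu⟩, mem_filter.2 ⟨huD, v, mem_filter.2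
      ⟨mem_univ v, hvD, ?_⟩⟩⟩
    rw [← hnu]
    ext y
    simp [and_comm]
  calc 2 ≤ #(nbrs T D v) := hD2
    _ = ∑ y ∈ nbrs T D v, 1 := card_eq_sum_ones _
    _ ≤ ∑ y ∈ nbrs T D v, italianOfSet T D y := sum_le_sum fun y hy => by
      have hyE : y ∉ extNbhd T D := fun hyE => (mem_filter.1 hyE).2.1 (mem_nbrs.1 hy).1
      unfold italianOfSet
      split_ifs <;> simp_all
    _ ≤ _ := sum_le_sum_of_subset fun y hy => mem_nbrs.2 ⟨mem_univ y, (mem_nbrs.1 hy).2⟩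

lemma sum_italianOfSet_add_card_extNbhd (D : Finset V) :
    ∑ v, italianOfSet T D v + #(extNbhd T D) = Fintype.card V + #(weak T D) := by
  have hpoint : ∀ v, italianOfSet T D v + (if v ∈ extNbhd T D then 1 else 0)
      = 1 + (if v ∈ weak T D then 1 else 0) := fun v => by
    have : v ∈ weak T D → v ∉ extNbhd T D := fun hv hvE =>
      (mem_filter.1 hvE).2.1 (mem_filter.1 hv).1
    unfold italianOfSet
    split_ifs <;> simp_all
  have := sum_congr rfl fun v (_ : v ∈ univ) => hpoint v
  simpa only [sum_add_distrib, sum_ite_mem, univ_inter, sum_const, smul_eq_mul, mul_one,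
    card_univ] using this

lemma le_gdiff_of_isRomanPair (h : IsRomanPair T univ A B) :
    (Fintype.card V : ℤ) - (2 * #A + #B) ≤ gdiff T := by
  have hsub : univ ⊆ extNbhd T A ∪ A ∪ B := fun v _ => by
    by_cases hA : v ∈ A
    · simp [hA]
    by_cases hB : v ∈ B
    · simp [hB]
    obtain ⟨a, ha, hva⟩ := h v (mem_univ v) hA hB
    exact mem_union_left _ (mem_union_left _ (mem_filter.2 ⟨mem_univ v, hA, a, ha, hva⟩))
  have := card_le_card hsub
  have := card_union_le (extNbhd T A ∪ A) B
  have := card_union_le (extNbhd T A) A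
  have hA : diffSet T A ≤ gdiff T := le_sup' (diffSet T) (mem_powerset.2 (subset_univ A))
  rw [card_univ] at *
  unfold diffSet at hA
  omega

theorem stmt_14 {V : Type*} [Fintype V] [DecidableEq V] (T : SimpleGraph V)
    [DecidableRel T.Adj] (htree : T.IsTree) :
    4 * sdiff T ≤ (Fintype.card V : ℤ) + 3 * gdiff T := by
  obtain ⟨D, -, hD⟩ := exists_mem_eq_sup' (univ : Finset V).powerset_nonempty (sdiffSet T)
  obtain ⟨A, B, hAB, hweight⟩ := exists_isRomanPair_of_forall_exists_isRemovable
    (fun S hS hf => exists_isRemovable_of_isTree htree hS hf) univ (isItalianOn_italianOfSet D)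
  have hsum := sum_italianOfSet_add_card_extNbhd (T := T) D
  have hgdiff := le_gdiff_of_isRomanPair hAB
  have hsdiff : sdiff T = sdiffSet T D := hD
  unfold sdiffSet at hsdiff
  omega

end StrongDifferential
end
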